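/- Fix real numbers α₁, α₂ ≥ 0 and b ≥ 0 (b playing the role of β/(1−β)). For K, L even natural numbers define M_{K,L} = ∑_{k=0}^{K/2} ∑_{l=0}^{L/2} (K!/((2k)!(K/2−k)!2^{K/2−k})) · (L!/((2l)!(L/2−l)!2^{L/2−l})) · (2(k+l)−1)!! · b^{k+l} · α₁^k α₂^l, and for K, L odd define M_{K,L} = ∑_{k=0}^{(K−1)/2} ∑_{l=0}^{(L−1)/2} (K!/((2k+1)!((K−1)/2−k)!2^{(K−1)/2−k})) · (L!/((2l+1)!((L−1)/2−l)!2^{(L−1)/2−l})) · (2(k+l)+1)!! · b^{k+l+1} · α₁^{k+1/2} α₂^{l+1/2}. Then for all even K, L ∈ ℕ₀ the recursion M_{K,L+2} = K·M_{1,1}·M_{K−1,L+1} + (L+1)·M_{0,2}·M_{K,L} holds, where M_{1,1} = √(α₁α₂)·b and M_{0,2} = 1 + α₂b. -/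

import Mathlib

/-!
`M_{K,L}` is the mixed moment `E[(Z₁ + √(α₁b) W)^K (Z₂ + √(α₂b) W)^L]` of independent standard
Gaussians `Z₁, Z₂, W`, and the recursion is Gaussian integration by parts. Combinatorially,
for `l ≤ n`, `evenCoeff n l = C(2n, 2l) (2n-2l-1)!!` and `oddCoeff n l = C(2n+1, 2l+1) (2n-2l-1)!!`
are coefficients of the moments `E[(x + Z)^N]`, hence satisfy the Pascal-type recursion
`E[(x+Z)^{N+1}] = x E[(x+Z)^N] + N E[(x+Z)^{N-1}]`, while
`gaussWeight k l = E[W^{2(k+l)}] (α₁b)^k (α₂b)^l` gains the factor `(2k + 2l + 1) α₂b` when `l`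
grows. Summing the recursion against the weight, first over `l` and then over `k`, produces the
two terms of the recursion.
-/

open Nat Finset

noncomputable section

/-- The limiting mixed moments `M_{K,L}` of the normalized group sums in the two-group
Curie–Weiss model, with group proportions `a1, a2` and `b = β/(1−β)`: for `K, L` both even
`M_{K,L} = ∑_{k=0}^{K/2} ∑_{l=0}^{L/2} (K!/((2k)!(K/2−k)!2^{K/2−k}))
(L!/((2l)!(L/2−l)!2^{L/2−l})) (2(k+l)−1)!! b^{k+l} a1^k a2^l`,
and for `K, L` both odd
`M_{K,L} = ∑_{k=0}^{(K−1)/2} ∑_{l=0}^{(L−1)/2} (K!/((2k+1)!((K−1)/2−k)!2^{(K−1)/2−k}))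
(L!/((2l+1)!((L−1)/2−l)!2^{(L−1)/2−l})) (2(k+l)+1)!! b^{k+l+1} a1^{k+1/2} a2^{l+1/2}`. -/
def Mlim (a1 a2 b : ℝ) (K L : ℕ) : ℝ :=
  if Even K ∧ Even L then
    ∑ k ∈ Finset.range (K / 2 + 1), ∑ l ∈ Finset.range (L / 2 + 1),
      (K ! : ℝ) / (((2 * k)! : ℝ) * ((K / 2 - k)! : ℝ) * 2 ^ (K / 2 - k)) *
        ((L ! : ℝ) / (((2 * l)! : ℝ) * ((L / 2 - l)! : ℝ) * 2 ^ (L / 2 - l))) *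
        ((2 * (k + l) - 1)‼ : ℝ) * b ^ (k + l) * a1 ^ k * a2 ^ l
  else
    ∑ k ∈ Finset.range ((K - 1) / 2 + 1), ∑ l ∈ Finset.range ((L - 1) / 2 + 1),
      (K ! : ℝ) / (((2 * k + 1)! : ℝ) * (((K - 1) / 2 - k)! : ℝ) * 2 ^ ((K - 1) / 2 - k)) *
        ((L ! : ℝ) / (((2 * l + 1)! : ℝ) * (((L - 1) / 2 - l)! : ℝ) * 2 ^ ((L - 1) / 2 - l))) *
        ((2 * (k + l) + 1)‼ : ℝ) * b ^ (k + l + 1) *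
        (Real.sqrt a1 * a1 ^ k) * (Real.sqrt a2 * a2 ^ l)

def evenCoeff (m k : ℕ) : ℝ := (2 * m)! / ((2 * k)! * (m - k)! * 2 ^ (m - k))

def oddCoeff (m k : ℕ) : ℝ := (2 * m + 1)! / ((2 * k + 1)! * (m - k)! * 2 ^ (m - k))

lemma evenCoeff_succ_zero (n : ℕ) : evenCoeff (n + 1) 0 = (2 * n + 1) * evenCoeff n 0 := by
  simp only [evenCoeff, Nat.sub_zero, mul_zero, Nat.factorial_zero, Nat.cast_one, one_mul,
    show 2 * (n + 1) = 2 * n + 1 + 1 by ring, Nat.factorial_succ, pow_succ]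
  push_cast
  field_simp
  ring

lemma evenCoeff_succ_succ {n l : ℕ} (hl : l < n) :
    evenCoeff (n + 1) (l + 1) = oddCoeff n l + (2 * n + 1) * evenCoeff n (l + 1) := by
  obtain ⟨e, rfl⟩ := Nat.exists_eq_add_of_lt hl
  simp only [evenCoeff, oddCoeff, show l + e + 1 + 1 - (l + 1) = e + 1 by omega,
    show l + e + 1 - l = e + 1 by omega, show l + e + 1 - (l + 1) = e by omega,
    show 2 * (l + e + 1 + 1) = 2 * (l + e + 1) + 1 + 1 by ring,
    show 2 * (l + 1) = 2 * l + 1 + 1 by ring, Nat.factorial_succ, pow_succ]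
  push_cast
  field_simp
  ring

lemma evenCoeff_succ_self (n : ℕ) : evenCoeff (n + 1) (n + 1) = oddCoeff n n := by
  simp [evenCoeff, oddCoeff, show 2 * (n + 1) = 2 * n + 1 + 1 by ring, div_self,
    Nat.factorial_ne_zero]

lemma two_mul_add_one_mul_oddCoeff (n l : ℕ) :
    (2 * l + 1) * oddCoeff n l = (2 * n + 1) * evenCoeff n l := by
  simp only [evenCoeff, oddCoeff, Nat.factorial_succ]
  push_cast
  field_simp

lemma succ_mul_evenCoeff_succ (m k : ℕ) :
    (k + 1) * evenCoeff (m + 1) (k + 1) = (m + 1) * oddCoeff m k := by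
  simp only [evenCoeff, oddCoeff, Nat.add_sub_add_right,
    show ∀ j, 2 * (j + 1) = 2 * j + 1 + 1 from fun j => by ring, Nat.factorial_succ]
  push_cast
  field_simp
  ring

def gaussWeight (a1 a2 b : ℝ) (k l : ℕ) : ℝ :=
  (2 * (k + l) - 1)‼ * b ^ (k + l) * a1 ^ k * a2 ^ l

lemma gaussWeight_succ_right (a1 a2 b : ℝ) (k l : ℕ) :
    gaussWeight a1 a2 b k (l + 1) = (2 * k + 2 * l + 1) * (a2 * b) * gaussWeight a1 a2 b k l := by
  rw [gaussWeight, gaussWeight, show k + (l + 1) = k + l + 1 by ring,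
    show 2 * (k + l + 1) - 1 = 2 * (k + l) + 1 by omega, Nat.doubleFactorial_add_one]
  push_cast
  ring

lemma sum_evenCoeff_succ_mul (n : ℕ) (j c : ℝ) (f : ℕ → ℝ)
    (hf : ∀ l, f (l + 1) = (j + 2 * l + 1) * c * f l) :
    ∑ l ∈ range (n + 2), evenCoeff (n + 1) l * f l =
      j * c * ∑ l ∈ range (n + 1), oddCoeff n l * f l +
        (2 * n + 1) * (1 + c) * ∑ l ∈ range (n + 1), evenCoeff n l * f l := by
  have hpascal : ∑ l ∈ range (n + 1), evenCoeff (n + 1) (l + 1) * f (l + 1) =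
      ∑ l ∈ range (n + 1), oddCoeff n l * f (l + 1) +
        (2 * n + 1) * ∑ l ∈ range n, evenCoeff n (l + 1) * f (l + 1) := by
    have hterm : ∀ l ∈ range n, evenCoeff (n + 1) (l + 1) * f (l + 1) =
        oddCoeff n l * f (l + 1) + (2 * n + 1) * (evenCoeff n (l + 1) * f (l + 1)) := by
      intro l hl
      rw [evenCoeff_succ_succ (mem_range.mp hl)]
      ring
    rw [sum_range_succ, sum_range_succ, evenCoeff_succ_self, mul_sum, sum_congr rfl hterm,
      sum_add_distrib]
    ring
  have hodd : ∑ l ∈ range (n + 1), oddCoeff n l * f (l + 1) =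
      j * c * ∑ l ∈ range (n + 1), oddCoeff n l * f l +
        (2 * n + 1) * c * ∑ l ∈ range (n + 1), evenCoeff n l * f l := by
    rw [mul_sum, mul_sum, ← sum_add_distrib]
    refine sum_congr rfl fun l _ => ?_
    rw [hf]
    linear_combination c * f l * two_mul_add_one_mul_oddCoeff n l
  have heven : ∑ l ∈ range (n + 1), evenCoeff n l * f l =
      evenCoeff n 0 * f 0 + ∑ l ∈ range n, evenCoeff n (l + 1) * f (l + 1) := by
    rw [sum_range_succ', add_comm]
  rw [sum_range_succ', hpascal, hodd, evenCoeff_succ_zero, heven]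
  ring

lemma sum_natCast_mul_evenCoeff (m : ℕ) (g : ℕ → ℝ) :
    ∑ k ∈ range (m + 1), (k : ℝ) * evenCoeff m k * g k =
      m * ∑ k ∈ range m, oddCoeff (m - 1) k * g (k + 1) := by
  rcases m with _ | m
  · simp
  rw [sum_range_succ', mul_sum]
  simp only [Nat.cast_zero, zero_mul, add_zero, Nat.add_sub_cancel, Nat.cast_add_one]
  refine sum_congr rfl fun k _ => ?_
  linear_combination g (k + 1) * succ_mul_evenCoeff_succ m k

lemma Mlim_two_mul (a1 a2 b : ℝ) (m n : ℕ) :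
    Mlim a1 a2 b (2 * m) (2 * n) = ∑ k ∈ range (m + 1), evenCoeff m k *
      ∑ l ∈ range (n + 1), evenCoeff n l * gaussWeight a1 a2 b k l := by
  rw [Mlim, if_pos ⟨even_two_mul m, even_two_mul n⟩]
  simp only [mul_div_cancel_left₀ _ two_ne_zero, mul_sum]
  refine sum_congr rfl fun k _ => sum_congr rfl fun l _ => ?_
  simp only [evenCoeff, gaussWeight]
  ring

lemma sqrt_mul_Mlim_two_mul_add_one {a1 a2 : ℝ} (ha1 : 0 ≤ a1) (ha2 : 0 ≤ a2) (b : ℝ)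
    (m n : ℕ) :
    √(a1 * a2) * b * Mlim a1 a2 b (2 * m + 1) (2 * n + 1) = a2 * b *
      ∑ k ∈ range (m + 1), oddCoeff m k *
        ∑ l ∈ range (n + 1), oddCoeff n l * gaussWeight a1 a2 b (k + 1) l := by
  obtain ⟨s1, hs1, rfl⟩ : ∃ s, 0 ≤ s ∧ s ^ 2 = a1 :=
    ⟨_, Real.sqrt_nonneg _, Real.sq_sqrt ha1⟩
  obtain ⟨s2, hs2, rfl⟩ : ∃ s, 0 ≤ s ∧ s ^ 2 = a2 :=
    ⟨_, Real.sqrt_nonneg _, Real.sq_sqrt ha2⟩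
  rw [Mlim, if_neg fun h => Nat.not_even_two_mul_add_one m h.1, ← mul_pow,
    Real.sqrt_sq (mul_nonneg hs1 hs2), Real.sqrt_sq hs1, Real.sqrt_sq hs2]
  simp only [Nat.add_sub_cancel, mul_div_cancel_left₀ _ two_ne_zero, mul_sum]
  refine sum_congr rfl fun k _ => sum_congr rfl fun l _ => ?_
  rw [oddCoeff, oddCoeff, gaussWeight, show k + 1 + l = k + l + 1 by ring,
    show 2 * (k + l + 1) - 1 = 2 * (k + l) + 1 by omega]
  ring

theorem Mlim_recursion_general (a1 a2 b : ℝ) (ha1 : 0 ≤ a1) (ha2 : 0 ≤ a2)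
    (K L : ℕ) (hK : Even K) (hL : Even L) :
    Mlim a1 a2 b K (L + 2) =
      K * (Real.sqrt (a1 * a2) * b) * Mlim a1 a2 b (K - 1) (L + 1) +
        (L + 1) * (1 + a2 * b) * Mlim a1 a2 b K L := by
  obtain ⟨m, rfl⟩ := hK.two_dvd
  obtain ⟨n, rfl⟩ := hL.two_dvd
  set G : ℕ → ℝ := fun k => ∑ l ∈ range (n + 1), oddCoeff n l * gaussWeight a1 a2 b k l
  have hinner (k : ℕ) := sum_evenCoeff_succ_mul n (2 * k) (a2 * b) (gaussWeight a1 a2 b k)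
    (gaussWeight_succ_right a1 a2 b k)
  have hodd : (m : ℝ) * (a2 * b * ∑ k ∈ range m, oddCoeff (m - 1) k * G (k + 1)) =
      m * (√(a1 * a2) * b * Mlim a1 a2 b (2 * m - 1) (2 * n + 1)) := by
    rcases m with _ | m
    · simp
    rw [show 2 * (m + 1) - 1 = 2 * m + 1 by omega, sqrt_mul_Mlim_two_mul_add_one ha1 ha2]
    rfl
  calc Mlim a1 a2 b (2 * m) (2 * n + 2)
      = ∑ k ∈ range (m + 1), evenCoeff m k *
          (2 * k * (a2 * b) * G k + (2 * n + 1) * (1 + a2 * b) *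
            ∑ l ∈ range (n + 1), evenCoeff n l * gaussWeight a1 a2 b k l) := by
        rw [show 2 * n + 2 = 2 * (n + 1) by ring, Mlim_two_mul]
        exact sum_congr rfl fun k _ => by rw [hinner]
    _ = 2 * a2 * b * ∑ k ∈ range (m + 1), (k : ℝ) * evenCoeff m k * G k +
          (2 * n + 1) * (1 + a2 * b) * Mlim a1 a2 b (2 * m) (2 * n) := by
        rw [Mlim_two_mul, mul_sum, mul_sum, ← sum_add_distrib]
        exact sum_congr rfl fun k _ => by ring
    _ = _ := by
        rw [sum_natCast_mul_evenCoeff]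
        push_cast
        linear_combination 2 * hodd

/-- The limiting moments `M_{K,L}` of the two-group Curie–Weiss model satisfy, for even
`K, L`, the Gaussian moment recursion
`M_{K,L+2} = K·M_{1,1}·M_{K−1,L+1} + (L+1)·M_{0,2}·M_{K,L}`,
where `M_{1,1} = √(α₁α₂)·b` and `M_{0,2} = 1 + α₂·b`. -/
theorem Mlim_recursion (a1 a2 b : ℝ) (ha1 : 0 ≤ a1) (ha2 : 0 ≤ a2) (hb : 0 ≤ b)
    (K L : ℕ) (hK : Even K) (hL : Even L) :
    Mlim a1 a2 b K (L + 2) =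
      K * (Real.sqrt (a1 * a2) * b) * Mlim a1 a2 b (K - 1) (L + 1) +
        (L + 1) * (1 + a2 * b) * Mlim a1 a2 b K L :=
  Mlim_recursion_general a1 a2 b ha1 ha2 K L hK hL
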